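/- Let R = A ×_k B be the fiber product of positively graded Noetherian k-algebras over a field k, and let M be a graded A-module viewed as an R-module via π_1 : R → A. Then tr_R(M) ⊆ tr_A(M)·R ⊕ ((0 :_B m_B))·R. -/

import Mathlib

set_option synthInstance.maxHeartbeats 1000000
set_option maxHeartbeats 1000000

noncomputable section

/-- The fiber product `A ×ₖ B = {(a,b) : f a = g b}`, as a subalgebra of `A × B`. -/
def fiberProd {k A B : Type*} [CommSemiring k] [Semiring A] [Semiring B]
    [Algebra k A] [Algebra k B] (f : A →ₐ[k] k) (g : B →ₐ[k] k) : Subalgebra k (A × B) :=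
  AlgHom.equalizer (f.comp (AlgHom.fst k A B)) (g.comp (AlgHom.snd k A B))

/-- The canonical map `ι₁ : A → A ×ₖ B`, `a ↦ (a, f a)`. -/
def fiberProdInl {k A B : Type*} [CommSemiring k] [Semiring A] [Semiring B]
    [Algebra k A] [Algebra k B] (f : A →ₐ[k] k) (g : B →ₐ[k] k) :
    A →ₐ[k] fiberProd f g :=
  AlgHom.codRestrict ((AlgHom.id k A).prod ((Algebra.ofId k B).comp f)) (fiberProd f g)
    (fun a => by show f a = g (algebraMap k B (f a)); simp)

/-- The canonical map `ι₂ : B → A ×ₖ B`, `b ↦ (g b, b)`. -/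
def fiberProdInr {k A B : Type*} [CommSemiring k] [Semiring A] [Semiring B]
    [Algebra k A] [Algebra k B] (f : A →ₐ[k] k) (g : B →ₐ[k] k) :
    B →ₐ[k] fiberProd f g :=
  AlgHom.codRestrict (((Algebra.ofId k A).comp g).prod (AlgHom.id k B)) (fiberProd f g)
    (fun b => by show f (algebraMap k A (g b)) = g b; simp)

/-!
Let `φ : M → R` be `R`-linear and write `φ x = (a, b)`. As `R` acts on `M` through `A`, every
`(0, c)` with `c ∈ m_B` kills `M`, so `b ∈ (0 :_B m_B)`; and `a = ψ x` for the `A`-linear form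
`ψ = π₁ ∘ φ`. Hence `φ x = ι₁ (a - f a) + ι₂ b`, and it remains to see that `f a ∈ tr_A(M)`. Since
`A₀ = k`, `f a` is the degree-zero part of `ψ x`; for homogeneous `x ∈ M_j` this is the value at `x`
of the degree `-j` component of `ψ`, which is again an `A`-linear form on `M`.
-/

open DirectSum

section FiberProd

variable {k A B : Type*} [CommRing k] [CommRing A] [CommRing B] [Algebra k A] [Algebra k B]
  {f : A →ₐ[k] k} {g : B →ₐ[k] k}

theorem coe_fiberProdInl (a : A) :
    (fiberProdInl f g a : A × B) = (a, algebraMap k B (f a)) := rfl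

theorem coe_fiberProdInr (b : B) :
    (fiberProdInr f g b : A × B) = (algebraMap k A (g b), b) := rfl

theorem fiberProd_eq_inl_add_inr (r : fiberProd f g) :
    r = fiberProdInl f g ((r : A × B).1 - algebraMap k A (f (r : A × B).1)) +
      fiberProdInr f g (r : A × B).2 := by
  have hr : f (r : A × B).1 = g (r : A × B).2 := r.2
  ext
  · simp [coe_fiberProdInl, coe_fiberProdInr, hr]
  · simp [coe_fiberProdInl, coe_fiberProdInr]

variable {M : Type*} [AddCommMonoid M] [Module A M] [Module (fiberProd f g) M]

def LinearMap.fiberProdFst (hcomp : ∀ (r : fiberProd f g) (x : M), r • x = (r : A × B).1 • x)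
    (φ : M →ₗ[fiberProd f g] fiberProd f g) : M →ₗ[A] A where
  toFun x := (φ x : A × B).1
  map_add' x y := by simp
  map_smul' a x := by
    have : a • x = fiberProdInl f g a • x := by rw [hcomp, coe_fiberProdInl]
    simp [this, coe_fiberProdInl]

theorem LinearMap.snd_mem_annihilator_ker
    (hcomp : ∀ (r : fiberProd f g) (x : M), r • x = (r : A × B).1 • x)
    (φ : M →ₗ[fiberProd f g] fiberProd f g) (x : M) :
    (φ x : A × B).2 ∈ (RingHom.ker g).annihilator := by
  refine Submodule.mem_annihilator.2 fun c hc => ?_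
  have hcx : fiberProdInr f g c • x = 0 := by
    rw [hcomp, coe_fiberProdInr, RingHom.mem_ker.1 hc, map_zero, zero_smul]
  have hmul : fiberProdInr f g c * φ x = 0 := by rw [← smul_eq_mul, ← map_smul, hcx, map_zero]
  simpa [coe_fiberProdInr, mul_comm] using congrArg (fun r : fiberProd f g => (r : A × B).2) hmul

end FiberProd

theorem apply_decompose_zero {A S σ F : Type*} [Semiring A] [SetLike σ A] [AddSubmonoidClass σ A]
    (𝒜 : ℕ → σ) [GradedRing 𝒜] [AddCommMonoid S] [FunLike F A S] [AddMonoidHomClass F A S]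
    (φ : F) (hφ : ∀ i, 0 < i → ∀ a ∈ 𝒜 i, φ a = 0) (y : A) :
    φ (decompose 𝒜 y 0) = φ y := by
  induction y using Decomposition.inductionOn 𝒜 with
  | zero => simp
  | add y y' hy hy' =>
    rw [decompose_add, DirectSum.add_apply, AddMemClass.coe_add, map_add, hy, hy', map_add]
  | @homogeneous i a =>
    rcases Nat.eq_zero_or_pos i with rfl | hi
    · rw [decompose_coe, of_eq_same]
    · rw [decompose_coe, of_eq_of_ne _ _ _ hi.ne, hφ i hi a a.2]
      simp

theorem algebraMap_apply_eq_decompose_zero {k A : Type*} [CommSemiring k] [Semiring A]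
    [Algebra k A] (𝒜 : ℕ → Submodule k A) [GradedAlgebra 𝒜]
    (h𝒜 : 𝒜 0 ≤ LinearMap.range (Algebra.linearMap k A))
    (f : A →ₐ[k] k) (hf : ∀ i, 0 < i → ∀ a ∈ 𝒜 i, f a = 0) (y : A) :
    algebraMap k A (f y) = decompose 𝒜 y 0 := by
  obtain ⟨c, hc⟩ := h𝒜 (decompose 𝒜 y 0).2
  rw [← apply_decompose_zero 𝒜 f hf, ← hc]
  simp

namespace LinearMap

variable {A M σ τ : Type*} [Semiring A] [SetLike σ A] [AddSubmonoidClass σ A]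
  (𝒜 : ℕ → σ) [GradedRing 𝒜] [AddCommMonoid M] [Module A M] [SetLike τ M]
  [AddSubmonoidClass τ M] (𝓜 : ℕ → τ) [Decomposition 𝓜]

/-- The homogeneous component of degree `-j` of `ψ`. -/
def lowerComponentAddHom (ψ : M →ₗ[A] A) (j : ℕ) : M →+ A :=
  (toAddMonoid fun i => if j ≤ i then
      (GradedRing.proj 𝒜 (i - j)).comp (ψ.toAddMonoidHom.comp (AddSubmonoidClass.subtype (𝓜 i)))
    else 0).comp (decomposeAddEquiv 𝓜).toAddMonoidHom

theorem lowerComponentAddHom_apply_of_mem (ψ : M →ₗ[A] A) (j : ℕ) {i : ℕ} {m : M}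
    (hm : m ∈ 𝓜 i) :
    lowerComponentAddHom 𝒜 𝓜 ψ j m = if j ≤ i then (decompose 𝒜 (ψ m) (i - j) : A) else 0 := by
  simp only [lowerComponentAddHom, AddMonoidHom.comp_apply, AddEquiv.coe_toAddMonoidHom,
    decomposeAddEquiv_apply, decompose_of_mem 𝓜 hm, toAddMonoid_of]
  split_ifs <;> rfl

variable [SetLike.GradedSMul 𝒜 𝓜]

theorem lowerComponentAddHom_smul (ψ : M →ₗ[A] A) (j : ℕ) (a : A) (m : M) :
    lowerComponentAddHom 𝒜 𝓜 ψ j (a • m) = a * lowerComponentAddHom 𝒜 𝓜 ψ j m := by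
  induction a using Decomposition.inductionOn 𝒜 generalizing m with
  | zero => simp
  | add a a' ha ha' => rw [add_smul, map_add, ha, ha', add_mul]
  | @homogeneous e a =>
    induction m using Decomposition.inductionOn 𝓜 with
    | zero => simp
    | add m m' hm hm' => rw [smul_add, map_add, hm, hm', map_add, mul_add]
    | @homogeneous i m =>
      have ham : (a : A) • (m : M) ∈ 𝓜 (e + i) := SetLike.GradedSMul.smul_mem a.2 m.2
      rw [lowerComponentAddHom_apply_of_mem 𝒜 𝓜 ψ j ham,
        lowerComponentAddHom_apply_of_mem 𝒜 𝓜 ψ j m.2, map_smul, smul_eq_mul]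
      by_cases hji : j ≤ i
      · rw [if_pos (by omega), if_pos hji,
          coe_decompose_mul_of_left_mem_of_le 𝒜 a.2 (by omega), show e + i - j - e = i - j by omega]
      · rw [if_neg hji, mul_zero]
        split_ifs with h
        · exact coe_decompose_mul_of_left_mem_of_not_le 𝒜 a.2 (by omega)
        · rfl

def lowerComponent (ψ : M →ₗ[A] A) (j : ℕ) : M →ₗ[A] A where
  __ := lowerComponentAddHom 𝒜 𝓜 ψ j
  map_smul' := lowerComponentAddHom_smul 𝒜 𝓜 ψ j

theorem lowerComponent_apply (ψ : M →ₗ[A] A) (j : ℕ) (m : M) :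
    lowerComponent 𝒜 𝓜 ψ j m = lowerComponentAddHom 𝒜 𝓜 ψ j m := rfl

end LinearMap

theorem LinearMap.decompose_apply_zero_mem_iSup_range {A M σ τ : Type*} [Semiring A] [SetLike σ A]
    [AddSubmonoidClass σ A] (𝒜 : ℕ → σ) [GradedRing 𝒜] [AddCommMonoid M] [Module A M]
    [SetLike τ M] [AddSubmonoidClass τ M] (𝓜 : ℕ → τ) [Decomposition 𝓜]
    [SetLike.GradedSMul 𝒜 𝓜] (ψ : M →ₗ[A] A) (x : M) :
    (decompose 𝒜 (ψ x) 0 : A) ∈ ⨆ χ : M →ₗ[A] A, LinearMap.range χ := by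
  classical
  have hsum : (decompose 𝒜 (ψ x) 0 : A) =
      ∑ j ∈ (decompose 𝓜 x).support, lowerComponent 𝒜 𝓜 ψ j (decompose 𝓜 x j) := by
    conv_lhs => rw [← sum_support_decompose 𝓜 x]
    rw [map_sum, decompose_sum, DFinsupp.finsetSum_apply, AddSubmonoidClass.coe_finsetSum]
    refine Finset.sum_congr rfl fun j _ => ?_
    rw [lowerComponent_apply, lowerComponentAddHom_apply_of_mem 𝒜 𝓜 ψ j (decompose 𝓜 x j).2,
      if_pos le_rfl, Nat.sub_self]
  rw [hsum]
  exact Submodule.sum_mem _ fun j _ => Submodule.mem_iSup_of_mem _ (LinearMap.mem_range_self _ _)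

theorem LinearMap.sub_algebraMap_mem_iSup_range {k A M : Type*} [CommSemiring k] [Ring A]
    [Algebra k A] (𝒜 : ℕ → Submodule k A) [GradedAlgebra 𝒜]
    (h𝒜 : 𝒜 0 ≤ LinearMap.range (Algebra.linearMap k A))
    (f : A →ₐ[k] k) (hf : ∀ i, 0 < i → ∀ a ∈ 𝒜 i, f a = 0)
    [AddCommMonoid M] [Module A M] {τ : Type*} [SetLike τ M] [AddSubmonoidClass τ M]
    (𝓜 : ℕ → τ) [Decomposition 𝓜] [SetLike.GradedSMul 𝒜 𝓜] (ψ : M →ₗ[A] A) (x : M) :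
    ψ x - algebraMap k A (f (ψ x)) ∈ ⨆ χ : M →ₗ[A] A, LinearMap.range χ := by
  rw [algebraMap_apply_eq_decompose_zero 𝒜 h𝒜 f hf]
  exact sub_mem (Submodule.mem_iSup_of_mem ψ (mem_range_self ψ x))
    (decompose_apply_zero_mem_iSup_range 𝒜 𝓜 ψ x)

theorem fiberProd_trace_le_general {k A B : Type*} [Field k] [CommRing A] [CommRing B]
    [Algebra k A] [Algebra k B]
    (𝒜 : ℕ → Submodule k A)
    [GradedAlgebra 𝒜]
    (h𝒜 : 𝒜 0 ≤ LinearMap.range (Algebra.linearMap k A))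
    (f : A →ₐ[k] k) (g : B →ₐ[k] k)
    (hf : ∀ i, 0 < i → ∀ a ∈ 𝒜 i, f a = 0)
    (M : Type*) [AddCommGroup M] [Module A M]
    (𝓜 : ℕ → AddSubgroup M) [DirectSum.Decomposition 𝓜]
    (hgr : ∀ i j, ∀ a ∈ 𝒜 i, ∀ x ∈ 𝓜 j, a • x ∈ 𝓜 (i + j))
    [Module (fiberProd f g) M]
    (hcomp : ∀ (r : fiberProd f g) (x : M), r • x = ((r : A × B).1) • x) :
    (⨆ φ : M →ₗ[fiberProd f g] fiberProd f g, LinearMap.range φ)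
      ≤ Ideal.map (fiberProdInl f g) (⨆ ψ : M →ₗ[A] A, LinearMap.range ψ)
          ⊔ Ideal.map (fiberProdInr f g) ((RingHom.ker g : Ideal B).annihilator) := by
  have : SetLike.GradedSMul 𝒜 𝓜 := ⟨fun i j a x ha hx => hgr i j a ha x hx⟩
  refine iSup_le fun φ => ?_
  rintro _ ⟨x, rfl⟩
  rw [fiberProd_eq_inl_add_inr (φ x)]
  exact add_mem
    (Ideal.mem_sup_left (Ideal.mem_map_of_mem _
      (LinearMap.sub_algebraMap_mem_iSup_range 𝒜 h𝒜 f hf 𝓜 (LinearMap.fiberProdFst hcomp φ) x)))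
    (Ideal.mem_sup_right (Ideal.mem_map_of_mem _ (LinearMap.snd_mem_annihilator_ker hcomp φ x)))

/-- Let `R = A ×ₖ B` be the fiber product of positively graded Noetherian
`k`-algebras over a field `k`, and let `M` be a graded `A`-module viewed as an `R`-module via
`π₁ : R → A`. Then `tr_R(M) ⊆ tr_A(M)·R ⊕ (0 :_B m_B)·R`. -/
theorem fiberProd_trace_le {k A B : Type*} [Field k] [CommRing A] [CommRing B]
    [Algebra k A] [Algebra k B] [IsNoetherianRing A] [IsNoetherianRing B]
    (𝒜 : ℕ → Submodule k A) (ℬ : ℕ → Submodule k B)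
    [GradedAlgebra 𝒜] [GradedAlgebra ℬ]
    (h𝒜 : 𝒜 0 ≤ LinearMap.range (Algebra.linearMap k A))
    (hℬ : ℬ 0 ≤ LinearMap.range (Algebra.linearMap k B))
    (f : A →ₐ[k] k) (g : B →ₐ[k] k)
    (hf : ∀ i, 0 < i → ∀ a ∈ 𝒜 i, f a = 0)
    (hg : ∀ i, 0 < i → ∀ b ∈ ℬ i, g b = 0)
    (M : Type*) [AddCommGroup M] [Module A M]
    (𝓜 : ℕ → AddSubgroup M) [DirectSum.Decomposition 𝓜]
    (hgr : ∀ i j, ∀ a ∈ 𝒜 i, ∀ x ∈ 𝓜 j, a • x ∈ 𝓜 (i + j))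
    [Module (fiberProd f g) M]
    (hcomp : ∀ (r : fiberProd f g) (x : M), r • x = ((r : A × B).1) • x) :
    (⨆ φ : M →ₗ[fiberProd f g] fiberProd f g, LinearMap.range φ)
      ≤ Ideal.map (fiberProdInl f g) (⨆ ψ : M →ₗ[A] A, LinearMap.range ψ)
          ⊔ Ideal.map (fiberProdInr f g) ((RingHom.ker g : Ideal B).annihilator) :=
  fiberProd_trace_le_general 𝒜 h𝒜 f g hf M 𝓜 hgr hcomp
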